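/- arXiv:1203.4610 — 10 statements merged into one kernel-verified Lean document; each statement's English description precedes it below -/
import Mathlib

section
/- If A is an acceptance set then its interior is again an acceptance set (nonempty, proper, monotone), and the closure of the interior of A equals the closure of A. -/
open BoundedContinuousFunction MeasureTheory Pointwise

variable {Ω : Type*} [TopologicalSpace Ω] [DiscreteTopology Ω] [Nonempty Ω]

/-- `X` is modeled as the Banach lattice `Ω →ᵇ ℝ` of bounded functions with sup norm
(the discrete topology makes every function continuous) and pointwise order.
An acceptance set is a nonempty proper monotone subset of `X`. -/
def IsAcceptanceSet (A : Set (Ω →ᵇ ℝ)) : Prop :=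
  A.Nonempty ∧ A ≠ Set.univ ∧ ∀ x ∈ A, ∀ y, x ≤ y → y ∈ A

/-- the risk measure `ρ_{A,S}` w.r.t. the acceptance set `A` and the traded asset
`S = (S0, ST)`, with values in the extended reals -/
noncomputable def riskMeasure (A : Set (Ω →ᵇ ℝ)) (S0 : ℝ) (ST : Ω →ᵇ ℝ) (x : Ω →ᵇ ℝ) : EReal :=
  sInf ((fun m : ℝ => (m : EReal)) '' {m : ℝ | x + (m / S0) • ST ∈ A})

lemma ball_subset_upper (x : Ω →ᵇ ℝ) {c : ℝ} (hc : 0 < c) :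
    Metric.ball (x + BoundedContinuousFunction.const Ω c) c ⊆ {y | x ≤ y} := by
  intro z hz
  intro ω
  have h1 : |z ω - (x ω + c)| ≤ ‖z - (x + BoundedContinuousFunction.const Ω c)‖ := by
    have := BoundedContinuousFunction.norm_coe_le_norm
      (z - (x + BoundedContinuousFunction.const Ω c)) ω
    simpa using this
  have h2 : ‖z - (x + BoundedContinuousFunction.const Ω c)‖ < c := by
    rw [Metric.mem_ball, dist_eq_norm] at hz
    exact hz
  have h3 := (abs_lt.mp (lt_of_le_of_lt h1 h2)).1
  show x ω ≤ z ω
  linarith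

theorem interior_acceptance_set
    (A : Set (Ω →ᵇ ℝ)) (hA : IsAcceptanceSet A) :
    IsAcceptanceSet (interior A) ∧ closure (interior A) = closure A := by
  obtain ⟨⟨x0, hx0⟩, hne, hmono⟩ := hA
  -- key: for x ∈ A and c > 0, x + const c ∈ interior A
  have key : ∀ x ∈ A, ∀ c : ℝ, 0 < c →
      x + BoundedContinuousFunction.const Ω c ∈ interior A := by
    intro x hx c hc
    rw [mem_interior]
    refine ⟨Metric.ball (x + BoundedContinuousFunction.const Ω c) c, ?_,
      Metric.isOpen_ball, Metric.mem_ball_self hc⟩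
    intro z hz
    exact hmono x hx z (ball_subset_upper x hc hz)
  have hmono' : ∀ x ∈ interior A, ∀ y, x ≤ y → y ∈ interior A := by
    intro x hx y hxy
    obtain ⟨ε, hε, hball⟩ := Metric.isOpen_iff.mp isOpen_interior x hx
    rw [mem_interior]
    refine ⟨Metric.ball y ε, ?_, Metric.isOpen_ball, Metric.mem_ball_self hε⟩
    intro z hz
    have hz' : x + (z - y) ∈ Metric.ball x ε := by
      rw [Metric.mem_ball, dist_eq_norm]
      rw [Metric.mem_ball, dist_eq_norm] at hz
      simpa using hz
    have hA' : x + (z - y) ∈ A := interior_subset (hball hz')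
    refine hmono _ hA' z ?_
    intro ω
    have h4 : x ω ≤ y ω := hxy ω
    show (x + (z - y)) ω ≤ z ω
    simp only [BoundedContinuousFunction.coe_add, BoundedContinuousFunction.coe_sub,
      Pi.add_apply, Pi.sub_apply]
    linarith
  refine ⟨⟨⟨x0 + BoundedContinuousFunction.const Ω 1, key x0 hx0 1 one_pos⟩, ?_, hmono'⟩, ?_⟩
  · intro h
    apply hne
    apply Set.eq_univ_of_univ_subset
    rw [← h]
    exact interior_subset
  · refine le_antisymm (closure_mono interior_subset) ?_
    refine closure_minimal ?_ isClosed_closure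
    intro x hx
    rw [Metric.mem_closure_iff]
    intro ε hε
    refine ⟨x + BoundedContinuousFunction.const Ω (ε / 2), key x hx _ (by linarith), ?_⟩
    have : dist x (x + BoundedContinuousFunction.const Ω (ε / 2)) = ‖BoundedContinuousFunction.const Ω (ε/2 : ℝ)‖ := by
      rw [dist_eq_norm]
      simp
    rw [this, BoundedContinuousFunction.norm_const_eq]
    rw [Real.norm_eq_abs, abs_of_pos (by linarith)]
    linarith
end

section
/- If A is an acceptance set then its closure is an acceptance set (in particular the closure is a proper subset of X), and the interior of the closure of A equals the interior of A. -/
open BoundedContinuousFunction MeasureTheory Pointwise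

variable {Ω : Type*} [TopologicalSpace Ω] [DiscreteTopology Ω] [Nonempty Ω]

/-- If `A` is monotone and `x - δ` belongs to the closure of `A` for some `δ > 0`,
then `x ∈ A`. -/
lemma mem_of_sub_const_mem_closure {A : Set (Ω →ᵇ ℝ)}
    (hmono : ∀ x ∈ A, ∀ y, x ≤ y → y ∈ A) {x : Ω →ᵇ ℝ} {δ : ℝ} (hδ : 0 < δ)
    (h : x - BoundedContinuousFunction.const Ω δ ∈ closure A) : x ∈ A := by
  obtain ⟨w, hwA, hdist⟩ := Metric.mem_closure_iff.mp h δ hδ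
  refine hmono w hwA x (fun ω => ?_)
  show w ω ≤ x ω
  have h1 := BoundedContinuousFunction.dist_coe_le_dist (f := x - BoundedContinuousFunction.const Ω δ) (g := w) ω
  have h1' : |x ω - (w ω + δ)| < δ := by
    have := h1.trans_lt hdist
    simpa [Real.dist_eq] using this
  linarith [(abs_lt.mp h1').1]

theorem closure_acceptance_set
    (A : Set (Ω →ᵇ ℝ)) (hA : IsAcceptanceSet A) :
    IsAcceptanceSet (closure A) ∧ interior (closure A) = interior A := by
  obtain ⟨hne, hproper, hmono⟩ := hA
  have hmono_cl : ∀ x ∈ closure A, ∀ y, x ≤ y → y ∈ closure A := by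
    intro x hx y hxy
    rw [Metric.mem_closure_iff] at hx ⊢
    intro ε hε
    obtain ⟨w, hwA, hdw⟩ := hx ε hε
    refine ⟨w + (y - x), hmono w hwA _ (le_add_of_nonneg_right (sub_nonneg.mpr hxy)), ?_⟩
    have : dist y (w + (y - x)) = dist x w := by
      rw [dist_eq_norm, dist_eq_norm]
      congr 1
      abel
    linarith [this ▸ hdw]
  have hproper_cl : closure A ≠ Set.univ := by
    obtain ⟨z, hz⟩ : ∃ z, z ∉ A := by
      by_contra h
      push_neg at h
      exact hproper (Set.eq_univ_of_forall h)
    intro h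
    apply hz
    apply mem_of_sub_const_mem_closure hmono (δ := 1) one_pos
    rw [h]; trivial
  have hint : interior (closure A) = interior A := by
    refine le_antisymm ?_ (interior_mono subset_closure)
    intro x hx
    obtain ⟨ε, hε, hball⟩ := Metric.isOpen_iff.mp isOpen_interior x hx
    have hball' : Metric.ball x ε ⊆ closure A := hball.trans interior_subset
    have hsub : Metric.ball x (ε / 2) ⊆ A := by
      intro y hy
      apply mem_of_sub_const_mem_closure hmono (δ := ε / 2) (by linarith)
      apply hball'
      rw [Metric.mem_ball] at hy ⊢
      have h1 : dist (y - BoundedContinuousFunction.const Ω (ε / 2)) y ≤ ε / 2 := by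
        rw [dist_eq_norm]
        simpa using (BoundedContinuousFunction.norm_const_le (ε / 2) : ‖BoundedContinuousFunction.const Ω (ε/2)‖ ≤ _).trans_eq (abs_of_pos (by linarith : (0:ℝ) < ε/2))
      calc dist (y - BoundedContinuousFunction.const Ω (ε / 2)) x
          ≤ dist (y - BoundedContinuousFunction.const Ω (ε / 2)) y + dist y x := dist_triangle _ _ _
        _ < ε := by linarith
    exact mem_interior.mpr ⟨Metric.ball x (ε / 2), hsub, Metric.isOpen_ball,
      Metric.mem_ball_self (by linarith)⟩
  exact ⟨⟨hne.mono subset_closure, hproper_cl, hmono_cl⟩, hint⟩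
end

section
/- If ρ : X → ℝ̄ is S-additive, decreasing, and not identically +∞ or −∞, then the set A_ρ := { x ∈ X : ρ(x) ≤ 0 } is an acceptance set (nonempty, proper, monotone) and ρ = ρ_{A_ρ, S}. -/
open BoundedContinuousFunction MeasureTheory Pointwise

variable {Ω : Type*} [TopologicalSpace Ω] [DiscreteTopology Ω] [Nonempty Ω]

lemma sInf_coe_ge (y : EReal) : sInf ((fun m : ℝ => (m : EReal)) '' {m : ℝ | y ≤ (m:EReal)}) = y := by
  apply le_antisymm
  · induction y with
    | bot =>
      rw [le_bot_iff, EReal.eq_bot_iff_forall_lt]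
      intro r
      refine lt_of_le_of_lt (sInf_le ⟨r - 1, ?_, rfl⟩) ?_
      · show (⊥:EReal) ≤ ((r - 1 : ℝ) : EReal); exact bot_le
      · show ((r - 1 : ℝ) : EReal) < (r : EReal)
        exact_mod_cast sub_one_lt r
    | coe r => exact sInf_le ⟨r, le_refl (r:EReal), rfl⟩
    | top => exact le_top
  · exact le_sInf (by rintro _ ⟨m, hm, rfl⟩; exact hm)

theorem S_additive_decreasing_is_riskMeasure
    (S0 : ℝ) (hS0 : 0 < S0) (ST : Ω →ᵇ ℝ) (hST : 0 ≤ ST) (hST0 : ST ≠ 0)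
    (ρ : (Ω →ᵇ ℝ) → EReal)
    (hadd : ∀ x : Ω →ᵇ ℝ, ∀ lam : ℝ, ρ (x + lam • ST) = ρ x - ((lam * S0 : ℝ) : EReal))
    (hdec : ∀ x y : Ω →ᵇ ℝ, x ≤ y → ρ y ≤ ρ x)
    (hnot_top : ¬ ∀ x, ρ x = ⊤) (hnot_bot : ¬ ∀ x, ρ x = ⊥) :
    IsAcceptanceSet {x : Ω →ᵇ ℝ | ρ x ≤ 0} ∧
      ∀ x, ρ x = riskMeasure {x : Ω →ᵇ ℝ | ρ x ≤ 0} S0 ST x := by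
  push_neg at hnot_top hnot_bot
  obtain ⟨a, ha⟩ := hnot_top
  obtain ⟨b, hb⟩ := hnot_bot
  have hS0' : S0 ≠ 0 := ne_of_gt hS0
  -- key computation : ρ (x + (m / S0) • ST) = ρ x - m
  have key : ∀ (x : Ω →ᵇ ℝ) (m : ℝ), ρ (x + (m / S0) • ST) = ρ x - (m : EReal) := by
    intro x m
    rw [hadd x (m / S0), div_mul_cancel₀ m hS0']
  -- nonempty
  have hne : ∃ x : Ω →ᵇ ℝ, ρ x ≤ 0 := by
    rcases eq_or_ne (ρ a) ⊥ with h | h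
    · exact ⟨a, by simp [h]⟩
    · have : ρ a = ((ρ a).toReal : EReal) := (EReal.coe_toReal ha h).symm
      refine ⟨a + ((ρ a).toReal / S0) • ST, ?_⟩
      rw [key, this, ← EReal.coe_sub]
      norm_num
  -- proper
  have hpr : ∃ x : Ω →ᵇ ℝ, ¬ ρ x ≤ 0 := by
    rcases eq_or_ne (ρ b) ⊤ with h | h
    · exact ⟨b, by simp [h]⟩
    · have hcoe : ρ b = ((ρ b).toReal : EReal) := (EReal.coe_toReal h hb).symm
      set r := (ρ b).toReal with hr
      refine ⟨b + ((r - 1) / S0) • ST, ?_⟩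
      rw [key, hcoe]
      rw [← EReal.coe_sub]
      norm_num
  constructor
  · refine ⟨hne, ?_, fun x hx y hxy => le_trans (hdec x y hxy) hx⟩
    obtain ⟨x, hx⟩ := hpr
    intro h
    exact hx (h ▸ Set.mem_univ x : x ∈ {x | ρ x ≤ 0})
  · intro x
    have hset : {m : ℝ | x + (m / S0) • ST ∈ {x : Ω →ᵇ ℝ | ρ x ≤ 0}} = {m : ℝ | ρ x ≤ (m : EReal)} := by
      ext m
      simp only [Set.mem_setOf_eq, key x m]
      rw [EReal.sub_le_iff_le_add (.inl (EReal.coe_ne_bot m)) (.inl (EReal.coe_ne_top m)), zero_add]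
    rw [riskMeasure, hset, sInf_coe_ge]
end

section
/- If the payoff S_T of the eligible asset is bounded away from zero (S_T ≥ ε·1_Ω for some ε > 0), then for any acceptance set A, the risk measure ρ_{A,S} equals S_0 times the cash-additive risk measure of the discounted position: ρ_{A,S}(x) = S_0 · inf { m ∈ ℝ : x/S_T + m·1_Ω ∈ Ã }, where Ã := { y/S_T : y ∈ A }; in particular ρ_{A,S} is finitely valued and Lipschitz continuous. -/
open BoundedContinuousFunction MeasureTheory Pointwise

variable {Ω : Type*} [TopologicalSpace Ω] [DiscreteTopology Ω] [Nonempty Ω]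

/-- the discounted position `x / S_T`, well defined when `S_T` is bounded away from zero -/
noncomputable def bcfDiv (x ST : Ω →ᵇ ℝ) (ε : ℝ) (hε : 0 < ε) (h : ∀ ω, ε ≤ ST ω) : Ω →ᵇ ℝ :=
  BoundedContinuousFunction.ofNormedAddCommGroup (fun ω => x ω / ST ω)
    continuous_of_discreteTopology (‖x‖ / ε)
    (by
      intro ω
      rw [norm_div]
      apply div_le_div₀ (norm_nonneg x) (x.norm_coe_le_norm ω) hε
      rw [Real.norm_eq_abs, abs_of_pos (lt_of_lt_of_le hε (h ω))]
      exact h ω)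

/-!
Since `S_T ≥ ε`, buying `‖x - y‖ / ε` extra units of the asset covers every shortfall of `x`
relative to `y`. Hence the set of numbers of units making `x` acceptable is nonempty (compare with
a point of `A`), bounded below (compare with a point outside `A`), and its infimum is
`ε⁻¹`-Lipschitz in `x`. Paying `m` in cash buys `m / S_0` units, so `ρ_{A,S}` is `S_0` times this
infimum; and dividing by `S_T` turns buying `m` units into adding the constant `m`, which
identifies the infimum with the cash-additive risk measure of the discounted position.
-/
section AcceptableUnits

variable {α : Type*} [TopologicalSpace α] {A : Set (α →ᵇ ℝ)} {ST : α →ᵇ ℝ} {ε : ℝ}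

lemma IsAcceptanceSet.isUpperSet (hA : IsAcceptanceSet A) : IsUpperSet A :=
  fun _ _ hxy hx => hA.2.2 _ hx _ hxy

def acceptableUnits (A : Set (α →ᵇ ℝ)) (ST x : α →ᵇ ℝ) : Set ℝ := {m | x + m • ST ∈ A}

lemma add_norm_sub_div_mem_acceptableUnits (hA : IsUpperSet A) (hε : 0 < ε)
    (hST : ∀ ω, ε ≤ ST ω) {y : α →ᵇ ℝ} {m : ℝ} (hm : m ∈ acceptableUnits A ST y)
    (x : α →ᵇ ℝ) : m + ‖x - y‖ / ε ∈ acceptableUnits A ST x := by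
  refine hA (fun ω => ?_) hm
  have hdev : y ω - x ω ≤ ‖x - y‖ := by
    have := (x - y).norm_coe_le_norm ω
    rw [coe_sub, Pi.sub_apply, Real.norm_eq_abs] at this
    linarith [neg_abs_le (x ω - y ω)]
  have hcover : ‖x - y‖ ≤ ‖x - y‖ / ε * ST ω := by
    calc ‖x - y‖ = ‖x - y‖ / ε * ε := by field_simp
      _ ≤ ‖x - y‖ / ε * ST ω := by gcongr; exact hST ω
  change y ω + m * ST ω ≤ x ω + (m + ‖x - y‖ / ε) * ST ω
  linarith

lemma acceptableUnits_nonempty (hA : IsUpperSet A) (hA₀ : A.Nonempty) (hε : 0 < ε)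
    (hST : ∀ ω, ε ≤ ST ω) (x : α →ᵇ ℝ) : (acceptableUnits A ST x).Nonempty := by
  obtain ⟨a, ha⟩ := hA₀
  have h₀ : (0 : ℝ) ∈ acceptableUnits A ST a := by simpa [acceptableUnits] using ha
  exact ⟨_, add_norm_sub_div_mem_acceptableUnits hA hε hST h₀ x⟩

lemma pos_of_mem_acceptableUnits_of_notMem (hA : IsUpperSet A) (hST : 0 ≤ ST)
    {b : α →ᵇ ℝ} (hb : b ∉ A) {t : ℝ} (ht : t ∈ acceptableUnits A ST b) : 0 < t := by
  by_contra! htn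
  exact hb (hA (fun ω => by simpa using mul_nonpos_of_nonpos_of_nonneg htn (hST ω)) ht)

lemma acceptableUnits_bddBelow (hA : IsUpperSet A) (hA₁ : A ≠ Set.univ) (hε : 0 < ε)
    (hST : ∀ ω, ε ≤ ST ω) (x : α →ᵇ ℝ) : BddBelow (acceptableUnits A ST x) := by
  obtain ⟨b, hb⟩ := (Set.ne_univ_iff_exists_notMem A).1 hA₁
  refine ⟨-(‖b - x‖ / ε), fun m hm => ?_⟩
  have := pos_of_mem_acceptableUnits_of_notMem hA (fun ω => hε.le.trans (hST ω)) hb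
    (add_norm_sub_div_mem_acceptableUnits hA hε hST hm b)
  linarith

lemma lipschitzWith_sInf_acceptableUnits (hA : IsUpperSet A) (hA₀ : A.Nonempty)
    (hA₁ : A ≠ Set.univ) (hε : 0 < ε) (hST : ∀ ω, ε ≤ ST ω) :
    LipschitzWith ε⁻¹.toNNReal fun x => sInf (acceptableUnits A ST x) := by
  refine LipschitzWith.of_le_add_mul _ fun x y => ?_
  rw [Real.coe_toNNReal _ (inv_nonneg.2 hε.le), dist_eq_norm, ← div_eq_inv_mul,
    ← sub_le_iff_le_add]
  refine le_csInf (acceptableUnits_nonempty hA hA₀ hε hST y) fun m hm => ?_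
  have := csInf_le (acceptableUnits_bddBelow hA hA₁ hε hST x)
    (add_norm_sub_div_mem_acceptableUnits hA hε hST hm x)
  linarith

lemma EReal.sInf_image_coe {s : Set ℝ} (hne : s.Nonempty) (hbdd : BddBelow s) :
    sInf ((↑) '' s : Set EReal) = ↑(sInf s) :=
  (Monotone.map_csInf_of_continuousAt continuous_coe_real_ereal.continuousAt
    EReal.coe_strictMono.monotone hne hbdd).symm

lemma riskMeasure_eq_coe_mul_sInf_acceptableUnits {S0 : ℝ} (hS0 : 0 < S0) {x : α →ᵇ ℝ}
    (hne : (acceptableUnits A ST x).Nonempty) (hbdd : BddBelow (acceptableUnits A ST x)) :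
    riskMeasure A S0 ST x = ↑(S0 * sInf (acceptableUnits A ST x)) := by
  have hprices : {m : ℝ | x + (m / S0) • ST ∈ A} = S0 • acceptableUnits A ST x := by
    ext m
    rw [Set.mem_smul_set_iff_inv_smul_mem₀ hS0.ne', smul_eq_mul, inv_mul_eq_div]
    rfl
  rw [riskMeasure, hprices, EReal.sInf_image_coe (hne.smul_set) (hbdd.smul_of_nonneg hS0.le),
    Real.sInf_smul_of_nonneg hS0.le, smul_eq_mul]

section Discounting

variable [DiscreteTopology α] (hε : 0 < ε) (hST : ∀ ω, ε ≤ ST ω)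

lemma bcfDiv_add_smul (x : α →ᵇ ℝ) (m : ℝ) :
    bcfDiv (x + m • ST) ST ε hε hST = bcfDiv x ST ε hε hST + const α m := by
  ext ω
  have : ST ω ≠ 0 := (hε.trans_le (hST ω)).ne'
  change (x ω + m * ST ω) / ST ω = x ω / ST ω + m
  field_simp

lemma bcfDiv_injective : Function.Injective fun x => bcfDiv x ST ε hε hST := by
  intro x y hxy
  ext ω
  have : ST ω ≠ 0 := (hε.trans_le (hST ω)).ne'
  have hω := congrArg (· ω) hxy
  change x ω / ST ω = y ω / ST ω at hω
  exact (div_left_inj' this).1 hω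

lemma setOf_bcfDiv_add_const_mem_discounted (x : α →ᵇ ℝ) :
    {m : ℝ | bcfDiv x ST ε hε hST + const α m ∈
      {g | ∃ y ∈ A, g = bcfDiv y ST ε hε hST}} = acceptableUnits A ST x := by
  ext m
  change (∃ y ∈ A, bcfDiv x ST ε hε hST + const α m = bcfDiv y ST ε hε hST) ↔
    x + m • ST ∈ A
  rw [← bcfDiv_add_smul]
  constructor
  · rintro ⟨y, hy, hxy⟩
    rwa [bcfDiv_injective hε hST hxy]
  · exact fun h => ⟨_, h, rfl⟩

end Discounting

end AcceptableUnits

theorem riskMeasure_eq_cash_additive_of_bounded_away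
    (A : Set (Ω →ᵇ ℝ)) (hA : IsAcceptanceSet A) (S0 : ℝ) (hS0 : 0 < S0)
    (ST : Ω →ᵇ ℝ) (ε : ℝ) (hε : 0 < ε) (hb : ∀ ω, ε ≤ ST ω) :
    (∀ x : Ω →ᵇ ℝ, riskMeasure A S0 ST x =
      (S0 : EReal) * sInf ((fun m : ℝ => (m : EReal)) ''
        {m : ℝ | bcfDiv x ST ε hε hb + BoundedContinuousFunction.const Ω m ∈
          {g : Ω →ᵇ ℝ | ∃ y ∈ A, g = bcfDiv y ST ε hε hb}})) ∧
    (∀ x : Ω →ᵇ ℝ, riskMeasure A S0 ST x ≠ ⊤ ∧ riskMeasure A S0 ST x ≠ ⊥) ∧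
    ∃ K : NNReal, LipschitzWith K (fun x : Ω →ᵇ ℝ => (riskMeasure A S0 ST x).toReal) := by
  have hne := acceptableUnits_nonempty hA.isUpperSet hA.1 hε hb
  have hbdd := acceptableUnits_bddBelow hA.isUpperSet hA.2.1 hε hb
  have hρ x := riskMeasure_eq_coe_mul_sInf_acceptableUnits hS0 (hne x) (hbdd x)
  refine ⟨fun x => ?_, fun x => ?_, ?_⟩
  · rw [hρ, setOf_bcfDiv_add_const_mem_discounted, EReal.sInf_image_coe (hne x) (hbdd x),
      EReal.coe_mul]
  · rw [hρ]
    exact ⟨EReal.coe_ne_top _, EReal.coe_ne_bot _⟩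
  · have hρ_real : (fun x => (riskMeasure A S0 ST x).toReal) =
        fun x => S0 • sInf (acceptableUnits A ST x) := by
      ext x
      rw [hρ, EReal.toReal_coe, smul_eq_mul]
    rw [hρ_real]
    exact ⟨_, (lipschitzWith_smul S0).comp
      (lipschitzWith_sInf_acceptableUnits hA.isUpperSet hA.1 hA.2.1 hε hb)⟩
end

section
/- Let A be a conic acceptance set (an acceptance set closed under multiplication by nonnegative scalars). Then ρ_{A,S}(x) < ∞ for all x ∈ X if and only if S_T belongs to the interior of A. -/
open BoundedContinuousFunction MeasureTheory Pointwise

variable {Ω : Type*} [TopologicalSpace Ω] [DiscreteTopology Ω] [Nonempty Ω]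

lemma bcf_le_iff (f g : Ω →ᵇ ℝ) : f ≤ g ↔ ∀ ω, f ω ≤ g ω := Iff.rfl

set_option maxHeartbeats 1000000 in
theorem conic_riskMeasure_lt_top_iff
    (A : Set (Ω →ᵇ ℝ)) (hA : IsAcceptanceSet A)
    (hcone : ∀ c : ℝ, 0 ≤ c → ∀ x ∈ A, c • x ∈ A) (S0 : ℝ) (hS0 : 0 < S0) (ST : Ω →ᵇ ℝ) (hST : 0 ≤ ST) (hST0 : ST ≠ 0) :
    (∀ x : Ω →ᵇ ℝ, riskMeasure A S0 ST x < ⊤) ↔ ST ∈ interior A := by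
  obtain ⟨-, hAproper, hAmono⟩ := hA
  constructor
  · intro h
    have h1 := h (const Ω (-1 : ℝ))
    have hne : {m : ℝ | const Ω (-1 : ℝ) + (m / S0) • ST ∈ A}.Nonempty := by
      by_contra hc
      rw [Set.not_nonempty_iff_eq_empty] at hc
      rw [riskMeasure, hc] at h1
      simp at h1
    obtain ⟨m, hm⟩ := hne
    have hm : const Ω (-1 : ℝ) + (m / S0) • ST ∈ A := hm
    have haval : ∀ ω, (const Ω (-1 : ℝ) + (m / S0) • ST) ω = -1 + (m / S0) * ST ω :=
      fun ω => rfl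
    have hmpos : 0 < m := by
      by_contra hle
      push_neg at hle
      apply hAproper
      ext y
      simp only [Set.mem_univ, iff_true]
      refine hAmono _ (hcone ‖y‖ (norm_nonneg y) _ hm) y ?_
      intro ω
      show ‖y‖ * ((const Ω (-1 : ℝ) + (m / S0) • ST) ω) ≤ y ω
      rw [haval]
      have h2 : (m / S0) * ST ω ≤ 0 :=
        mul_nonpos_of_nonpos_of_nonneg (div_nonpos_of_nonpos_of_nonneg hle hS0.le) (hST ω)
      have h3 : ‖y‖ * (-1 + (m / S0) * ST ω) ≤ -‖y‖ := by
        nlinarith [norm_nonneg y]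
      have h4 : -‖y‖ ≤ y ω := by
        have := y.norm_coe_le_norm ω
        rw [Real.norm_eq_abs] at this
        linarith [neg_abs_le (y ω)]
      linarith
    have hmem : (S0 / m) • (const Ω (-1 : ℝ) + (m / S0) • ST) ∈ A :=
      hcone _ (div_nonneg hS0.le hmpos.le) _ hm
    rw [mem_interior]
    refine ⟨Metric.ball ST (S0 / m), ?_, Metric.isOpen_ball, by
      simp [Metric.mem_ball, div_pos hS0 hmpos]⟩
    intro y hy
    refine hAmono _ hmem y ?_
    intro ω
    show (S0 / m) * ((const Ω (-1 : ℝ) + (m / S0) • ST) ω) ≤ y ω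
    rw [haval]
    have hdist : dist (y ω) (ST ω) < S0 / m := (dist_coe_le_dist ω).trans_lt hy
    rw [Real.dist_eq, abs_sub_lt_iff] at hdist
    have heval : (S0 / m) * ((-1) + (m / S0) * ST ω) = -(S0/m) + ST ω := by
      field_simp
    rw [heval]
    linarith [hdist.2]
  · intro hint x
    rw [mem_interior_iff_mem_nhds, Metric.mem_nhds_iff] at hint
    obtain ⟨ε, hε, hball⟩ := hint
    set m : ℝ := S0 * (‖x‖ + 1) / ε with hmdef
    have hm1 : 0 < m := by positivity
    have hS0m : S0 / m = ε / (‖x‖ + 1) := by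
      rw [hmdef]
      field_simp
    have hm2 : (S0 / m) * ‖x‖ < ε := by
      rw [hS0m, div_mul_eq_mul_div, div_lt_iff₀ (by positivity)]
      nlinarith [norm_nonneg x]
    have hmem : ST + (S0 / m) • x ∈ A := by
      apply hball
      simp only [Metric.mem_ball, dist_eq_norm]
      have h5 : ST + (S0 / m) • x - ST = (S0 / m) • x := by abel
      rw [h5]
      have hle : ‖(S0 / m) • x‖ ≤ (S0 / m) * ‖x‖ := by
        rw [norm_le (by positivity)]
        intro ω
        show ‖(S0 / m) * x ω‖ ≤ (S0 / m) * ‖x‖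
        rw [norm_mul, Real.norm_eq_abs (S0 / m), abs_of_nonneg (by positivity : (0:ℝ) ≤ S0 / m)]
        exact mul_le_mul_of_nonneg_left (x.norm_coe_le_norm ω) (by positivity)
      exact hle.trans_lt hm2
    have hmem2 : (m / S0) • (ST + (S0 / m) • x) ∈ A :=
      hcone _ (by positivity) _ hmem
    have heq : (m / S0) • (ST + (S0 / m) • x) = x + (m / S0) • ST := by
      rw [smul_add, smul_smul, div_mul_div_comm, mul_comm m S0, div_self (by positivity),
        one_smul]
      abel
    rw [heq] at hmem2
    calc riskMeasure A S0 ST x ≤ (m : EReal) := sInf_le ⟨m, hmem2, rfl⟩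
    _ < ⊤ := by exact_mod_cast EReal.coe_lt_top m
end

section
/- Let A be a conic acceptance set. Then ρ_{A,S}(x) > −∞ for all x ∈ X if and only if −S_T does not belong to the closure of A. -/
open BoundedContinuousFunction MeasureTheory Pointwise

variable {Ω : Type*} [TopologicalSpace Ω] [DiscreteTopology Ω] [Nonempty Ω]

theorem conic_riskMeasure_gt_bot_iff
    (A : Set (Ω →ᵇ ℝ)) (hA : IsAcceptanceSet A)
    (hcone : ∀ c : ℝ, 0 ≤ c → ∀ x ∈ A, c • x ∈ A) (S0 : ℝ) (hS0 : 0 < S0) (ST : Ω →ᵇ ℝ) (hST : 0 ≤ ST) (hST0 : ST ≠ 0) :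
    (∀ x : Ω →ᵇ ℝ, ⊥ < riskMeasure A S0 ST x) ↔ -ST ∉ closure A := by
  obtain ⟨-, -, hmono⟩ := hA
  constructor
  · intro h hc
    -- show ρ(1) = ⊥, contradicting h
    have key : ∀ m : ℝ, m < 0 → (1 : Ω →ᵇ ℝ) + (m / S0) • ST ∈ A := by
      intro m hm
      have hcpos : 0 < -m / S0 := div_pos (neg_pos.mpr hm) hS0
      set c := -m / S0 with hcdef
      set ε := 1 / c with hedef
      have hεpos : 0 < ε := one_div_pos.mpr hcpos
      obtain ⟨a, haA, hd⟩ := Metric.mem_closure_iff.mp hc ε hεpos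
      have hle : a ≤ -ST + ε • (1 : Ω →ᵇ ℝ) := by
        intro ω
        show a ω ≤ (-ST + ε • (1 : Ω →ᵇ ℝ)) ω
        have h1 : (a - (-ST)) ω ≤ ‖a - (-ST)‖ :=
          (abs_le.mp ((a - (-ST)).norm_coe_le_norm ω)).2
        have h2 : ‖a - (-ST)‖ < ε := by
          rw [← dist_eq_norm, dist_comm]; exact hd
        simp only [BoundedContinuousFunction.coe_sub, BoundedContinuousFunction.coe_neg,
          Pi.sub_apply, Pi.neg_apply] at h1
        simp only [BoundedContinuousFunction.coe_add, BoundedContinuousFunction.coe_smul,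
          BoundedContinuousFunction.coe_neg, Pi.add_apply, Pi.smul_apply, Pi.neg_apply,
          BoundedContinuousFunction.coe_one, Pi.one_apply, smul_eq_mul, mul_one]
        linarith
      have hmem : -ST + ε • (1 : Ω →ᵇ ℝ) ∈ A := hmono a haA _ hle
      have hmem2 : c • (-ST + ε • (1 : Ω →ᵇ ℝ)) ∈ A := hcone c hcpos.le _ hmem
      have heq : c • (-ST + ε • (1 : Ω →ᵇ ℝ)) = (1 : Ω →ᵇ ℝ) + (m / S0) • ST := by
        ext ω
        have hc0 : c ≠ 0 := ne_of_gt hcpos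
        simp only [BoundedContinuousFunction.coe_smul, BoundedContinuousFunction.coe_add,
          BoundedContinuousFunction.coe_neg, BoundedContinuousFunction.coe_one, Pi.smul_apply,
          Pi.add_apply, Pi.neg_apply, Pi.one_apply, smul_eq_mul, mul_one]
        rw [hedef, hcdef]
        have hS0' : S0 ≠ 0 := ne_of_gt hS0
        have hm0 : m ≠ 0 := ne_of_lt hm
        field_simp [hm0, hS0']
        ring
      rw [heq] at hmem2
      exact hmem2
    have hbot : riskMeasure A S0 ST 1 = ⊥ := by
      rw [riskMeasure, sInf_eq_bot]
      intro b hb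
      obtain ⟨r, -, hr⟩ := EReal.exists_between_coe_real hb
      refine ⟨(min r (-1) : ℝ), ⟨min r (-1),
        key _ (lt_of_le_of_lt (min_le_right _ _) (by norm_num)), rfl⟩, ?_⟩
      calc ((min r (-1) : ℝ) : EReal) ≤ (r : EReal) := by exact_mod_cast min_le_left _ _
        _ < b := hr
    exact absurd (h 1) (by simp [hbot])
  · intro hc x
    by_contra hb
    push_neg at hb
    have hbot : riskMeasure A S0 ST x = ⊥ := le_bot_iff.mp hb
    apply hc
    rw [Metric.mem_closure_iff]
    intro ε hε
    set b : ℝ := -(S0 * ‖x‖ / ε) with hbdef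
    rw [riskMeasure, sInf_eq_bot] at hbot
    obtain ⟨y, ⟨m, hmA, rfl⟩, hy⟩ := hbot (b : EReal) (EReal.bot_lt_coe b)
    have hm : m < b := EReal.coe_lt_coe_iff.mp hy
    have hS0x : 0 ≤ S0 * ‖x‖ / ε := by positivity
    have hmneg : m < 0 := lt_of_lt_of_le hm (by rw [hbdef]; linarith)
    set c : ℝ := S0 / (-m) with hcdef
    have hcpos : 0 < c := div_pos hS0 (neg_pos.mpr hmneg)
    have hmem : c • (x + (m / S0) • ST) ∈ A := hcone c hcpos.le _ hmA
    have heq : c • (x + (m / S0) • ST) = c • x - ST := by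
      ext ω
      simp only [BoundedContinuousFunction.coe_smul, BoundedContinuousFunction.coe_add,
        BoundedContinuousFunction.coe_sub, Pi.smul_apply, Pi.add_apply, Pi.sub_apply,
        smul_eq_mul]
      rw [hcdef]
      have hS0' : S0 ≠ 0 := ne_of_gt hS0
      have hm0 : m ≠ 0 := ne_of_lt hmneg
      field_simp [hm0, hS0']
      ring
    rw [heq] at hmem
    refine ⟨c • x - ST, hmem, ?_⟩
    have hdist : dist (-ST) (c • x - ST) = ‖c • x‖ := by
      rw [dist_eq_norm]
      have hd2 : -ST - (c • x - ST) = -(c • x) := by abel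
      rw [hd2, norm_neg]
    rw [hdist]
    have hmb : S0 * ‖x‖ / ε < -m := by
      have h5 : m < -(S0 * ‖x‖ / ε) := hm
      linarith
    have hkey : c * ‖x‖ < ε := by
      rw [hcdef, div_mul_eq_mul_div, div_lt_iff₀ (neg_pos.mpr hmneg)]
      have h6 : ε * (S0 * ‖x‖ / ε) = S0 * ‖x‖ := by field_simp
      nlinarith
    calc ‖c • x‖ ≤ ‖c‖ * ‖x‖ := norm_smul_le c x
      _ = c * ‖x‖ := by rw [Real.norm_eq_abs, abs_of_pos hcpos]
      _ < ε := hkey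
end

section
/- Let A be a coherent acceptance set (a convex cone that is a nonempty proper monotone subset). Then the following are equivalent: (a) ρ_{A,S} is finitely valued on all of X; (b) ρ_{A,S} never takes the value +∞; (c) S_T lies in the interior of A. -/
open BoundedContinuousFunction MeasureTheory Pointwise

variable {Ω : Type*} [TopologicalSpace Ω] [DiscreteTopology Ω] [Nonempty Ω]

/-- (b) ⇒ (c) -/
lemma aux_b_to_c (A : Set (Ω →ᵇ ℝ)) (hA : IsAcceptanceSet A)
    (hcone : ∀ c : ℝ, 0 ≤ c → ∀ x ∈ A, c • x ∈ A) (S0 : ℝ) (hS0 : 0 < S0)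
    (ST : Ω →ᵇ ℝ) (hST : 0 ≤ ST)
    (h : ∀ x : Ω →ᵇ ℝ, riskMeasure A S0 ST x ≠ ⊤) : ST ∈ interior A := by
  obtain ⟨m, hm⟩ : ∃ m : ℝ, (BoundedContinuousFunction.const Ω (-1 : ℝ)) + (m / S0) • ST ∈ A := by
    by_contra hc
    push_neg at hc
    apply h (BoundedContinuousFunction.const Ω (-1 : ℝ))
    have : {m : ℝ | (BoundedContinuousFunction.const Ω (-1 : ℝ)) + (m / S0) • ST ∈ A} = ∅ := by
      ext m; simpa using hc m
    simp [riskMeasure, this]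
  set m' : ℝ := max m 1 with hm'
  have hm'pos : 0 < m' := lt_of_lt_of_le one_pos (le_max_right _ _)
  have hmem : (BoundedContinuousFunction.const Ω (-1 : ℝ)) + (m' / S0) • ST ∈ A := by
    refine hA.2.2 _ hm _ (fun ω => ?_)
    show (BoundedContinuousFunction.const Ω (-1:ℝ) + (m / S0) • ST) ω
        ≤ (BoundedContinuousFunction.const Ω (-1:ℝ) + (m' / S0) • ST) ω
    simp only [BoundedContinuousFunction.add_apply, BoundedContinuousFunction.smul_apply,
      smul_eq_mul]
    have h1 : (0:ℝ) ≤ ST ω := hST ω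
    have h2 : m / S0 ≤ m' / S0 := by gcongr; exact le_max_left m 1
    nlinarith
  set lam : ℝ := m' / S0 with hlam
  have hlampos : 0 < lam := div_pos hm'pos hS0
  set δ : ℝ := 1 / lam with hδ
  have hδpos : 0 < δ := by positivity
  have hkey : (BoundedContinuousFunction.const Ω (-δ : ℝ)) + ST ∈ A := by
    have := hcone δ hδpos.le _ hmem
    have heq : δ • ((BoundedContinuousFunction.const Ω (-1:ℝ)) + lam • ST)
        = (BoundedContinuousFunction.const Ω (-δ : ℝ)) + ST := by
      ext ω
      simp only [BoundedContinuousFunction.smul_apply, BoundedContinuousFunction.add_apply,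
        BoundedContinuousFunction.const_apply, smul_eq_mul]
      have h5 : δ * lam = 1 := by rw [hδ]; field_simp
      linear_combination ST ω * h5
    rwa [heq] at this
  rw [mem_interior]
  refine ⟨Metric.ball ST δ, ?_, Metric.isOpen_ball, Metric.mem_ball_self hδpos⟩
  intro y hy
  refine hA.2.2 _ hkey _ (fun ω => ?_)
  show (BoundedContinuousFunction.const Ω (-δ:ℝ) + ST) ω ≤ y ω
  simp only [BoundedContinuousFunction.add_apply, BoundedContinuousFunction.const_apply]
  have h3 : |y ω - ST ω| ≤ ‖y - ST‖ := by
    have := (y - ST).norm_coe_le_norm ω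
    simpa [Real.norm_eq_abs] using this
  have h4 : ‖y - ST‖ < δ := by rwa [Metric.mem_ball, dist_eq_norm] at hy
  have := abs_le.mp h3
  linarith [this.1]

/-- (c) ⇒ (b) -/
lemma aux_c_to_b (A : Set (Ω →ᵇ ℝ))
    (hcone : ∀ c : ℝ, 0 ≤ c → ∀ x ∈ A, c • x ∈ A) (S0 : ℝ) (hS0 : 0 < S0)
    (ST : Ω →ᵇ ℝ) (hint : ST ∈ interior A) (x : Ω →ᵇ ℝ) :
    riskMeasure A S0 ST x ≠ ⊤ := by
  obtain ⟨ε, hε, hball⟩ : ∃ ε > 0, Metric.ball ST ε ⊆ A := by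
    rw [mem_interior_iff_mem_nhds, Metric.mem_nhds_iff] at hint
    exact hint
  set m : ℝ := S0 * (‖x‖ + 1) / ε with hmdef
  have hmpos : 0 < m := by positivity
  have hmm : x + (m / S0) • ST ∈ A := by
    have h1 : ST + (S0 / m) • x ∈ A := by
      apply hball
      rw [Metric.mem_ball, dist_eq_norm]
      have : ST + (S0 / m) • x - ST = (S0 / m) • x := by abel
      rw [this]
      have hn : ‖(S0 / m) • x‖ = |S0 / m| * ‖x‖ := by
        rw [norm_smul (S0 / m) x, Real.norm_eq_abs]
      rw [hn, abs_of_pos (by positivity)]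
      rw [hmdef, div_div_eq_mul_div, div_mul_eq_mul_div]
      rw [div_lt_iff₀ (by positivity)]
      have : ‖x‖ < ‖x‖ + 1 := by linarith
      calc S0 * ε * ‖x‖ < S0 * ε * (‖x‖ + 1) := by nlinarith
        _ = ε * (S0 * (‖x‖ + 1)) := by ring
    have h2 := hcone (m / S0) (by positivity) _ h1
    have heq : (m / S0) • (ST + (S0 / m) • x) = x + (m / S0) • ST := by
      rw [smul_add, smul_smul]
      have : m / S0 * (S0 / m) = 1 := by field_simp
      rw [this, one_smul, add_comm]
    rwa [heq] at h2
  intro htop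
  have hle : riskMeasure A S0 ST x ≤ (m : EReal) :=
    sInf_le ⟨m, hmm, rfl⟩
  rw [htop] at hle
  exact (EReal.coe_ne_top m) (top_le_iff.mp hle)

/-- (c) ⇒ never ⊥ -/
lemma aux_c_to_nbot (A : Set (Ω →ᵇ ℝ)) (hA : IsAcceptanceSet A) (hconv : Convex ℝ A)
    (hcone : ∀ c : ℝ, 0 ≤ c → ∀ x ∈ A, c • x ∈ A) (S0 : ℝ) (hS0 : 0 < S0)
    (ST : Ω →ᵇ ℝ) (hint : ST ∈ interior A) (x : Ω →ᵇ ℝ) :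
    riskMeasure A S0 ST x ≠ ⊥ := by
  intro hbot
  have hsmall : ∀ r : ℝ, ∃ m : ℝ, x + (m / S0) • ST ∈ A ∧ m < r := by
    intro r
    rw [riskMeasure, sInf_eq_bot] at hbot
    obtain ⟨a, ⟨m, hm, rfl⟩, hlt⟩ := hbot (r : EReal) (EReal.bot_lt_coe r)
    refine ⟨m, hm, ?_⟩
    have : (m : EReal) < (r : EReal) := hlt
    exact_mod_cast this
  -- -ST ∈ closure A
  have hclos : -ST ∈ closure A := by
    rw [Metric.mem_closure_iff]
    intro ε hε
    obtain ⟨m, hm, hmlt⟩ := hsmall (-(S0 * ‖x‖ / ε) - 1)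
    have hmneg : m < 0 := by
      have : (0:ℝ) ≤ S0 * ‖x‖ / ε := by positivity
      linarith
    set c : ℝ := S0 / (-m) with hc
    have hcpos : 0 < c := div_pos hS0 (by linarith)
    refine ⟨c • (x + (m / S0) • ST), hcone c hcpos.le _ hm, ?_⟩
    have hm0 : m ≠ 0 := ne_of_lt hmneg
    have heq : c • (x + (m / S0) • ST) = c • x - ST := by
      rw [smul_add, smul_smul]
      have h5 : c * (m / S0) = -1 := by
        rw [hc]; field_simp
      rw [h5]; module
    rw [heq, dist_eq_norm]
    have h6 : -ST - (c • x - ST) = -(c • x) := by abel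
    have hn : ‖c • x‖ = |c| * ‖x‖ := by rw [norm_smul c x, Real.norm_eq_abs]
    rw [h6, norm_neg, hn, abs_of_pos hcpos]
    -- c * ‖x‖ < ε, i.e. S0 * ‖x‖ / (-m) < ε
    rw [hc, div_mul_eq_mul_div, div_lt_iff₀ (by linarith)]
    have hbig : S0 * ‖x‖ / ε + 1 < -m := by linarith
    have : S0 * ‖x‖ < ε * (S0 * ‖x‖ / ε + 1) := by
      rw [mul_add, mul_one, mul_div_cancel₀ _ (ne_of_gt hε)]
      linarith
    calc S0 * ‖x‖ < ε * (S0 * ‖x‖ / ε + 1) := this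
      _ ≤ ε * (-m) := by nlinarith
  -- 0 ∈ interior A
  have hzero : (0 : Ω →ᵇ ℝ) ∈ interior A := by
    have := hconv.combo_interior_closure_mem_interior hint hclos
      (by norm_num : (0:ℝ) < 1/2) (by norm_num : (0:ℝ) ≤ 1/2) (by norm_num)
    have heq : (1/2 : ℝ) • ST + (1/2 : ℝ) • (-ST) = (0 : Ω →ᵇ ℝ) := by
      rw [smul_neg]; abel
    rwa [heq] at this
  -- A = univ, contradiction
  obtain ⟨δ, hδ, hball⟩ : ∃ δ > 0, Metric.ball (0 : Ω →ᵇ ℝ) δ ⊆ A := by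
    rw [mem_interior_iff_mem_nhds, Metric.mem_nhds_iff] at hzero
    exact hzero
  apply hA.2.1
  rw [Set.eq_univ_iff_forall]
  intro y
  set c : ℝ := δ / (2 * (‖y‖ + 1)) with hc
  have hcpos : 0 < c := by positivity
  have hcy : c • y ∈ A := by
    apply hball
    rw [Metric.mem_ball, dist_zero_right]
    have hn : ‖c • y‖ = |c| * ‖y‖ := by rw [norm_smul c y, Real.norm_eq_abs]
    rw [hn, abs_of_pos hcpos]
    rw [hc, div_mul_eq_mul_div, div_lt_iff₀ (by positivity)]
    nlinarith [norm_nonneg y, hδ]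
  have := hcone c⁻¹ (by positivity) _ hcy
  rwa [smul_smul, inv_mul_cancel₀ (ne_of_gt hcpos), one_smul] at this

theorem coherent_riskMeasure_finiteness
    (A : Set (Ω →ᵇ ℝ)) (hA : IsAcceptanceSet A) (hconv : Convex ℝ A)
    (hcone : ∀ c : ℝ, 0 ≤ c → ∀ x ∈ A, c • x ∈ A) (S0 : ℝ) (hS0 : 0 < S0) (ST : Ω →ᵇ ℝ) (hST : 0 ≤ ST) (hST0 : ST ≠ 0) :
    ((∀ x : Ω →ᵇ ℝ, riskMeasure A S0 ST x ≠ ⊤ ∧ riskMeasure A S0 ST x ≠ ⊥) ↔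
      ST ∈ interior A) ∧
    ((∀ x : Ω →ᵇ ℝ, riskMeasure A S0 ST x ≠ ⊤) ↔ ST ∈ interior A) := by
  constructor
  · constructor
    · intro h
      exact aux_b_to_c A hA hcone S0 hS0 ST hST (fun x => (h x).1)
    · intro hint x
      exact ⟨aux_c_to_b A hcone S0 hS0 ST hint x,
        aux_c_to_nbot A hA hconv hcone S0 hS0 ST hint x⟩
  · constructor
    · intro h
      exact aux_b_to_c A hA hcone S0 hS0 ST hST h
    · intro hint x
      exact aux_c_to_b A hcone S0 hS0 ST hint x
end

section
/- Let A_α := { x ∈ X : ℙ[x < 0] ≤ α } be the Value-at-Risk acceptance set at level α ∈ (0,1), and S = (S_0, S_T) a traded asset. Then ρ_{A_α,S}(x) < ∞ for all x if and only if ℙ[S_T < λ] ≤ α for some λ > 0, and ρ_{A_α,S}(x) > −∞ for all x if and only if ℙ[S_T > 0] > α. -/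
open BoundedContinuousFunction MeasureTheory Pointwise

variable {Ω : Type*} [TopologicalSpace Ω] [DiscreteTopology Ω] [Nonempty Ω]

theorem var_riskMeasure_finiteness
    [MeasurableSpace Ω] (P : Measure Ω) [IsProbabilityMeasure P] (α : ℝ) (hα : α ∈ Set.Ioo (0 : ℝ) 1) (S0 : ℝ) (hS0 : 0 < S0) (ST : Ω →ᵇ ℝ) (hST : 0 ≤ ST) (hST0 : ST ≠ 0) :
    ((∀ x : Ω →ᵇ ℝ,
        riskMeasure {y : Ω →ᵇ ℝ | P {ω | y ω < 0} ≤ ENNReal.ofReal α} S0 ST x < ⊤) ↔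
      ∃ lam : ℝ, 0 < lam ∧ P {ω | ST ω < lam} ≤ ENNReal.ofReal α) ∧
    ((∀ x : Ω →ᵇ ℝ,
        ⊥ < riskMeasure {y : Ω →ᵇ ℝ | P {ω | y ω < 0} ≤ ENNReal.ofReal α} S0 ST x) ↔
      ENNReal.ofReal α < P {ω | 0 < ST ω}) := by
  obtain ⟨hα0, hα1⟩ := hα
  have hSTnn : ∀ ω, 0 ≤ ST ω := fun ω => hST ω
  have hαlt1 : ENNReal.ofReal α < 1 := by
    rw [ENNReal.ofReal_lt_one]; exact hα1
  constructor
  · constructor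
    · -- ρ < ⊤ everywhere → ∃ lam
      intro h
      by_contra hc
      push_neg at hc
      have h1 := h (-1)
      have hempty : {m : ℝ | (-1 : Ω →ᵇ ℝ) + (m / S0) • ST ∈
          {y : Ω →ᵇ ℝ | P {ω | y ω < 0} ≤ ENNReal.ofReal α}} = ∅ := by
        ext m
        simp only [Set.mem_setOf_eq, Set.mem_empty_iff_false, iff_false]
        intro hm
        rcases le_or_gt m 0 with hm0 | hm0
        · -- m ≤ 0 : everything negative
          have : {ω | ((-1 : Ω →ᵇ ℝ) + (m / S0) • ST) ω < 0} = Set.univ := by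
            ext ω
            simp only [Set.mem_setOf_eq, Set.mem_univ, iff_true,
              BoundedContinuousFunction.coe_add, BoundedContinuousFunction.coe_smul,
              Pi.add_apply, Pi.smul_apply, BoundedContinuousFunction.coe_neg,
              BoundedContinuousFunction.coe_one, Pi.neg_apply, Pi.one_apply, smul_eq_mul]
            have hneg : m / S0 ≤ 0 := div_nonpos_of_nonpos_of_nonneg hm0 hS0.le
            nlinarith [mul_nonneg (neg_nonneg.2 hneg) (hSTnn ω)]
          rw [this, measure_univ] at hm
          exact absurd hm (not_le.2 hαlt1)
        · -- m > 0
          have hlam := hc (S0 / m) (div_pos hS0 hm0)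
          have hsub : {ω | ST ω < S0 / m} ⊆
              {ω | ((-1 : Ω →ᵇ ℝ) + (m / S0) • ST) ω < 0} := by
            intro ω hω
            simp only [Set.mem_setOf_eq] at hω ⊢
            simp only [BoundedContinuousFunction.coe_add, BoundedContinuousFunction.coe_smul,
              Pi.add_apply, Pi.smul_apply, BoundedContinuousFunction.coe_neg,
              BoundedContinuousFunction.coe_one, Pi.neg_apply, Pi.one_apply, smul_eq_mul]
            have h2 : m / S0 * ST ω < 1 := by
              rw [div_mul_eq_mul_div, div_lt_one hS0]
              have := (lt_div_iff₀ hm0).1 hω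
              nlinarith
            linarith
          exact absurd (le_trans (measure_mono hsub) hm) (not_le.2 hlam)
      rw [riskMeasure, hempty, Set.image_empty, sInf_empty] at h1
      exact lt_irrefl _ h1
    · -- ∃ lam → ρ < ⊤ everywhere
      rintro ⟨lam, hlam, hP⟩ x
      set m : ℝ := S0 * ‖x‖ / lam with hm
      have hmem : x + (m / S0) • ST ∈
          {y : Ω →ᵇ ℝ | P {ω | y ω < 0} ≤ ENNReal.ofReal α} := by
        have hsub : {ω | (x + (m / S0) • ST) ω < 0} ⊆ {ω | ST ω < lam} := by
          intro ω hω
          simp only [Set.mem_setOf_eq, BoundedContinuousFunction.coe_add,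
            BoundedContinuousFunction.coe_smul, Pi.add_apply, Pi.smul_apply,
            smul_eq_mul] at hω ⊢
          by_contra hge
          push_neg at hge
          have hmS0 : m / S0 = ‖x‖ / lam := by
            rw [hm]; field_simp
          have habs : |x ω| ≤ ‖x‖ := by
            rw [← Real.norm_eq_abs]; exact x.norm_coe_le_norm ω
          have h1 : -‖x‖ ≤ x ω := by
            have := neg_abs_le (x ω); linarith
          rw [hmS0] at hω
          have e1 : ‖x‖ / lam * lam = ‖x‖ := div_mul_cancel₀ _ hlam.ne'
          have e2 : 0 ≤ ‖x‖ / lam * (ST ω - lam) :=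
            mul_nonneg (div_nonneg (norm_nonneg x) hlam.le) (sub_nonneg.2 hge)
          nlinarith [e1, e2, h1, mul_sub (‖x‖ / lam) (ST ω) lam]
        exact le_trans (measure_mono hsub) hP
      rw [riskMeasure]
      exact lt_of_le_of_lt (sInf_le ⟨m, hmem, rfl⟩) (EReal.coe_lt_top m)
  · constructor
    · -- ρ > ⊥ everywhere → α < P{0 < ST}
      intro h
      by_contra hc
      push_neg at hc
      have h0 := h 0
      have hmem : ∀ m : ℝ, m ≤ 0 → (0 : Ω →ᵇ ℝ) + (m / S0) • ST ∈
          {y : Ω →ᵇ ℝ | P {ω | y ω < 0} ≤ ENNReal.ofReal α} := by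
        intro m hm0
        have hsub : {ω | ((0 : Ω →ᵇ ℝ) + (m / S0) • ST) ω < 0} ⊆ {ω | 0 < ST ω} := by
          intro ω hω
          simp only [Set.mem_setOf_eq, BoundedContinuousFunction.coe_add,
            BoundedContinuousFunction.coe_smul, BoundedContinuousFunction.coe_zero,
            Pi.add_apply, Pi.smul_apply, Pi.zero_apply, smul_eq_mul, zero_add] at hω ⊢
          rcases (hSTnn ω).lt_or_eq with h' | h'
          · exact h'
          · rw [← h', mul_zero] at hω; exact absurd hω (lt_irrefl 0)
        exact le_trans (measure_mono hsub) hc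
      obtain ⟨r, hr1, hr2⟩ := EReal.exists_between_coe_real h0
      set m : ℝ := min 0 (r - 1) with hmdef
      have hle : riskMeasure {y : Ω →ᵇ ℝ | P {ω | y ω < 0} ≤ ENNReal.ofReal α} S0 ST 0
          ≤ (m : EReal) := sInf_le ⟨m, hmem m (min_le_left _ _), rfl⟩
      have : (m : EReal) < r := by
        exact_mod_cast lt_of_le_of_lt (min_le_right 0 (r - 1)) (by linarith)
      exact absurd (lt_of_le_of_lt (hr2.le.trans hle) this) (lt_irrefl _)
    · -- α < P{0<ST} → ρ > ⊥ everywhere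
      intro hP x
      -- find ε > 0 with α < P{ε ≤ ST}
      have hU : {ω | 0 < ST ω} = ⋃ n : ℕ, {ω | 1 / (n + 1 : ℝ) ≤ ST ω} := by
        ext ω
        simp only [Set.mem_setOf_eq, Set.mem_iUnion]
        constructor
        · intro hω
          obtain ⟨n, hn⟩ := exists_nat_one_div_lt hω
          exact ⟨n, hn.le⟩
        · rintro ⟨n, hn⟩
          exact lt_of_lt_of_le (by positivity) hn
      have hdir : Directed (· ⊆ ·) (fun n : ℕ => {ω | 1 / (n + 1 : ℝ) ≤ ST ω}) := by
        apply Monotone.directed_le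
        intro a b hab ω hω
        simp only [Set.mem_setOf_eq] at hω ⊢
        refine le_trans ?_ hω
        apply one_div_le_one_div_of_le (by positivity)
        have : (a : ℝ) ≤ b := Nat.cast_le.2 hab
        linarith
      have := hdir.measure_iUnion (μ := P)
      rw [hU, this] at hP
      obtain ⟨n, hn⟩ := lt_iSup_iff.1 hP
      set ε : ℝ := 1 / (n + 1 : ℝ) with hεdef
      have hε : 0 < ε := by positivity
      -- lower bound
      set c : ℝ := -(S0 * ‖x‖ / ε) with hcdef
      have hlow : (c : EReal) ≤
          riskMeasure {y : Ω →ᵇ ℝ | P {ω | y ω < 0} ≤ ENNReal.ofReal α} S0 ST x := by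
        apply le_sInf
        rintro b ⟨m, hm, rfl⟩
        rw [EReal.coe_le_coe_iff]
        by_contra hlt
        push_neg at hlt
        have hsub : {ω | ε ≤ ST ω} ⊆ {ω | (x + (m / S0) • ST) ω < 0} := by
          intro ω hω
          simp only [Set.mem_setOf_eq] at hω ⊢
          simp only [BoundedContinuousFunction.coe_add, BoundedContinuousFunction.coe_smul,
            Pi.add_apply, Pi.smul_apply, smul_eq_mul]
          have hm0 : m ≤ 0 := by
            have h0 : 0 ≤ S0 * ‖x‖ / ε := by positivity
            rw [hcdef] at hlt; linarith
          have hneg : m / S0 ≤ 0 := div_nonpos_of_nonpos_of_nonneg hm0 hS0.le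
          have h1 : m / S0 * ST ω ≤ m / S0 * ε := by
            nlinarith [mul_nonneg (neg_nonneg.2 hneg) (sub_nonneg.2 hω)]
          have h2 : m / S0 * ε < -‖x‖ := by
            rw [div_mul_eq_mul_div, div_lt_iff₀ hS0]
            calc m * ε < -(S0 * ‖x‖ / ε) * ε := by
                  rw [hcdef] at hlt
                  exact mul_lt_mul_of_pos_right hlt hε
              _ = -(S0 * ‖x‖) := by rw [neg_mul, div_mul_cancel₀ _ hε.ne']
              _ = -‖x‖ * S0 := by ring
          have h3 : x ω ≤ ‖x‖ := le_trans (le_abs_self _) (x.norm_coe_le_norm ω)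
          linarith
        have : ENNReal.ofReal α < P {ω | (x + (m / S0) • ST) ω < 0} :=
          lt_of_lt_of_le hn (measure_mono hsub)
        simp only [Set.mem_setOf_eq] at hm
        exact absurd hm (not_le.2 this)
      exact lt_of_lt_of_le (by exact_mod_cast EReal.bot_lt_coe c) hlow
end

section
/- For α ∈ (0, 1/2) and a traded asset S = (S_0, S_T), the VaR-based risk measure ρ_{A_α,S} is finitely valued on all of X if and only if there exists λ > 0 with ℙ[S_T < λ] ≤ α. -/
open BoundedContinuousFunction MeasureTheory Pointwise

variable {Ω : Type*} [TopologicalSpace Ω] [DiscreteTopology Ω] [Nonempty Ω]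

/-!
A position `x` hedged with `c` units of the asset is `x + c • S_T`. If `ℙ[S_T < λ] ≤ α`, the
hedge `c = ‖x‖ / λ` confines the loss event to `{S_T < λ}`, so `ρ(x) < ∞`; and any `c < -‖x‖ / λ`
makes the loss event contain `{S_T ≥ λ}`, of probability `≥ 1 - α > α`, so `ρ(x) > -∞`.
Conversely, if `ρ(-1) < ∞` some `-1 + c • S_T` is acceptable: `c ≤ 0` is impossible since then
the loss is sure, and for `c > 0` the loss event contains `{S_T < 1 / c}`, so `λ = 1 / c` works.
-/

section

omit [DiscreteTopology Ω] [Nonempty Ω]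

theorem riskMeasure_ne_top_iff {A : Set (Ω →ᵇ ℝ)} {S0 : ℝ} (hS0 : S0 ≠ 0) (ST x : Ω →ᵇ ℝ) :
    riskMeasure A S0 ST x ≠ ⊤ ↔ ∃ c : ℝ, x + c • ST ∈ A := by
  simp only [riskMeasure, ne_eq, sInf_eq_top, Set.forall_mem_image, EReal.coe_ne_top,
    imp_false, not_forall, not_not, Set.mem_ofPred_eq]
  constructor
  · rintro ⟨m, hm⟩
    exact ⟨m / S0, hm⟩
  · rintro ⟨c, hc⟩
    exact ⟨S0 * c, by rwa [mul_div_cancel_left₀ c hS0]⟩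

theorem riskMeasure_ne_bot_of_bddBelow {A : Set (Ω →ᵇ ℝ)} {S0 : ℝ} (hS0 : 0 < S0)
    {ST x : Ω →ᵇ ℝ} (h : BddBelow {c : ℝ | x + c • ST ∈ A}) :
    riskMeasure A S0 ST x ≠ ⊥ := by
  obtain ⟨b, hb⟩ := h
  have hlower : ((S0 * b : ℝ) : EReal) ≤ riskMeasure A S0 ST x := by
    refine le_sInf ?_
    rintro _ ⟨m, hm, rfl⟩
    have : b ≤ m / S0 := hb hm
    exact EReal.coe_le_coe_iff.2 (by rwa [le_div_iff₀' hS0] at this)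
  exact ne_bot_of_le_ne_bot (EReal.coe_ne_bot _) hlower

variable [MeasurableSpace Ω]

/-- The acceptance set `A_α` of the Value-at-Risk at level `α`. -/
def varAcceptanceSet (P : Measure Ω) (α : ℝ) : Set (Ω →ᵇ ℝ) :=
  {y | P {ω | y ω < 0} ≤ ENNReal.ofReal α}

theorem add_smul_mem_varAcceptanceSet {P : Measure Ω} {α lam : ℝ} {ST : Ω →ᵇ ℝ} (hlam : 0 < lam)
    (hP : P {ω | ST ω < lam} ≤ ENNReal.ofReal α) (x : Ω →ᵇ ℝ) :
    x + (‖x‖ / lam) • ST ∈ varAcceptanceSet P α := by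
  refine (measure_mono fun ω hω => ?_).trans hP
  simp only [Set.mem_ofPred_eq, coe_add, coe_smul, Pi.add_apply, smul_eq_mul] at hω ⊢
  by_contra! hge
  have hx : -‖x‖ ≤ x ω := neg_le_of_abs_le (x.norm_coe_le_norm ω)
  have : ‖x‖ ≤ ‖x‖ / lam * ST ω := by
    calc ‖x‖ = ‖x‖ / lam * lam := (div_mul_cancel₀ _ hlam.ne').symm
      _ ≤ ‖x‖ / lam * ST ω := by gcongr
  linarith

theorem neg_div_le_of_add_smul_mem_varAcceptanceSet {P : Measure Ω} [IsProbabilityMeasure P]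
    {α lam c : ℝ} {ST x : Ω →ᵇ ℝ} (hα : α < 1 / 2) (hlam : 0 < lam)
    (hP : P {ω | ST ω < lam} ≤ ENNReal.ofReal α) (hc : x + c • ST ∈ varAcceptanceSet P α) :
    -(‖x‖ / lam) ≤ c := by
  by_contra! hlt
  have hsub : {ω | ST ω < lam}ᶜ ⊆ {ω | (x + c • ST) ω < 0} := by
    intro ω hω
    simp only [Set.mem_compl_iff, Set.mem_ofPred_eq, not_lt, coe_add, coe_smul, Pi.add_apply,
      smul_eq_mul] at hω ⊢
    have hx : x ω ≤ ‖x‖ := (le_abs_self _).trans (x.norm_coe_le_norm ω)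
    have hc0 : c ≤ 0 := hlt.le.trans (neg_nonpos.2 (by positivity))
    have : c * ST ω < -‖x‖ := by
      calc c * ST ω ≤ c * lam := mul_le_mul_of_nonpos_left hω hc0
        _ < -(‖x‖ / lam) * lam := mul_lt_mul_of_pos_right hlt hlam
        _ = -‖x‖ := by field_simp
    linarith
  have hone : (1 : ENNReal) ≤ ENNReal.ofReal α + ENNReal.ofReal α := by
    calc (1 : ENNReal) = P Set.univ := measure_univ.symm
      _ ≤ P {ω | ST ω < lam} + P {ω | ST ω < lam}ᶜ := measure_univ_le_add_compl _
      _ ≤ ENNReal.ofReal α + ENNReal.ofReal α := add_le_add hP ((measure_mono hsub).trans hc)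
  have htwo : ENNReal.ofReal α + ENNReal.ofReal α < 1 := by
    rcases le_or_gt α 0 with hα0 | hα0
    · simp [ENNReal.ofReal_of_nonpos hα0]
    · rw [← ENNReal.ofReal_add hα0.le hα0.le]
      exact ENNReal.ofReal_lt_one.2 (by linarith)
  exact absurd hone (not_le.2 htwo)

theorem exists_measure_lt_le_of_neg_one_add_smul_mem_varAcceptanceSet {P : Measure Ω}
    [IsProbabilityMeasure P] {α c : ℝ} {ST : Ω →ᵇ ℝ} (hα : α < 1) (hST : 0 ≤ ST)
    (hc : -1 + c • ST ∈ varAcceptanceSet P α) :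
    ∃ lam : ℝ, 0 < lam ∧ P {ω | ST ω < lam} ≤ ENNReal.ofReal α := by
  have hαlt : ENNReal.ofReal α < 1 := ENNReal.ofReal_lt_one.2 hα
  rcases le_or_gt c 0 with hc0 | hc0
  · have huniv : {ω | (-1 + c • ST) ω < 0} = Set.univ := by
      ext ω
      simp only [Set.mem_ofPred_eq, coe_add, coe_neg, coe_one, coe_smul, Pi.add_apply,
        Pi.neg_apply, Pi.one_apply, smul_eq_mul, Set.mem_univ, iff_true]
      have hSTω : 0 ≤ ST ω := hST ω
      linarith [mul_nonpos_of_nonpos_of_nonneg hc0 hSTω]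
    rw [varAcceptanceSet, Set.mem_ofPred_eq, huniv, measure_univ] at hc
    exact absurd hc (not_le.2 hαlt)
  · refine ⟨c⁻¹, inv_pos.2 hc0, (measure_mono fun ω hω => ?_).trans hc⟩
    simp only [Set.mem_ofPred_eq, coe_add, coe_neg, coe_one, coe_smul, Pi.add_apply,
      Pi.neg_apply, Pi.one_apply, smul_eq_mul] at hω ⊢
    have := mul_lt_mul_of_pos_left hω hc0
    rw [mul_inv_cancel₀ hc0.ne'] at this
    linarith

end

theorem var_riskMeasure_finite_iff_of_small_level_general
    [MeasurableSpace Ω] (P : Measure Ω) [IsProbabilityMeasure P] (α : ℝ) (hα : α ∈ Set.Ioo (0 : ℝ) (1/2)) (S0 : ℝ) (hS0 : 0 < S0) (ST : Ω →ᵇ ℝ) (hST : 0 ≤ ST) :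
    (∀ x : Ω →ᵇ ℝ,
        riskMeasure {y : Ω →ᵇ ℝ | P {ω | y ω < 0} ≤ ENNReal.ofReal α} S0 ST x ≠ ⊤ ∧
        riskMeasure {y : Ω →ᵇ ℝ | P {ω | y ω < 0} ≤ ENNReal.ofReal α} S0 ST x ≠ ⊥) ↔
      ∃ lam : ℝ, 0 < lam ∧ P {ω | ST ω < lam} ≤ ENNReal.ofReal α := by
  constructor
  · intro h
    obtain ⟨c, hc⟩ := (riskMeasure_ne_top_iff hS0.ne' ST (-1)).1 (h (-1)).1
    exact exists_measure_lt_le_of_neg_one_add_smul_mem_varAcceptanceSet (by linarith [hα.2]) hST hc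
  · rintro ⟨lam, hlam, hP⟩ x
    refine ⟨(riskMeasure_ne_top_iff hS0.ne' ST x).2 ⟨_, add_smul_mem_varAcceptanceSet hlam hP x⟩,
      riskMeasure_ne_bot_of_bddBelow hS0 ⟨-(‖x‖ / lam), fun _ hc =>
        neg_div_le_of_add_smul_mem_varAcceptanceSet hα.2 hlam hP hc⟩⟩

theorem var_riskMeasure_finite_iff_of_small_level
    [MeasurableSpace Ω] (P : Measure Ω) [IsProbabilityMeasure P] (α : ℝ) (hα : α ∈ Set.Ioo (0 : ℝ) (1/2)) (S0 : ℝ) (hS0 : 0 < S0) (ST : Ω →ᵇ ℝ) (hST : 0 ≤ ST) (hST0 : ST ≠ 0) :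
    (∀ x : Ω →ᵇ ℝ,
        riskMeasure {y : Ω →ᵇ ℝ | P {ω | y ω < 0} ≤ ENNReal.ofReal α} S0 ST x ≠ ⊤ ∧
        riskMeasure {y : Ω →ᵇ ℝ | P {ω | y ω < 0} ≤ ENNReal.ofReal α} S0 ST x ≠ ⊥) ↔
      ∃ lam : ℝ, 0 < lam ∧ P {ω | ST ω < lam} ≤ ENNReal.ofReal α :=
  var_riskMeasure_finite_iff_of_small_level_general P α hα S0 hS0 ST hST
end

section
/- Let A, B be acceptance sets and S = (S_0, S_T), R = (R_0, R_T) traded assets with the same initial price P := S_0 = R_0, such that ρ_{A,S} and ρ_{B,R} are lower semicontinuous. Then ρ_{A,S} = ρ_{B,R} if and only if Closure(A) = Closure(B) and Closure(A) + { λ(R_T − S_T) : λ ∈ ℝ } = Closure(A). -/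
open BoundedContinuousFunction MeasureTheory Pointwise

variable {Ω : Type*} [TopologicalSpace Ω] [DiscreteTopology Ω] [Nonempty Ω]

/-!
For monotone `A`, `S_T ≥ 0` and lower semicontinuous `ρ_{A,S}`, `ρ_{A,S}(x) ≤ m` holds exactly
when `x + (m/P) S_T ∈ closure A`.
Since an extended real is determined by the reals above it, `ρ_{A,S} = ρ_{B,R}` therefore says
that `x + c S_T ∈ closure A ↔ x + c R_T ∈ closure B` for all `x` and `c`, and this is a statement
about two subsets of a vector space: taking `c = 0` gives `closure A = closure B`, and the
remaining condition is exactly invariance of this set under translation by multiples of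
`R_T - S_T`.
-/

theorem EReal.eq_of_forall_le_coe_iff {a b : EReal} (h : ∀ m : ℝ, a ≤ m ↔ b ≤ m) : a = b :=
  le_antisymm (EReal.le_of_forall_lt_iff_le.1 fun m hm => (h m).2 hm.le)
    (EReal.le_of_forall_lt_iff_le.1 fun m hm => (h m).1 hm.le)

theorem forall_add_smul_mem_iff_and_add_range_eq {K E : Type*} [Ring K] [AddCommGroup E]
    [Module K E] {C D : Set E} {u v : E} :
    (∀ x (c : K), x + c • u ∈ C ↔ x + c • v ∈ D) ↔
      C = D ∧ C + Set.range (fun lam : K => lam • (v - u)) = C := by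
  constructor
  · intro h
    obtain rfl : C = D := Set.ext fun x => by simpa using h x 0
    refine ⟨rfl, subset_antisymm ?_ fun x hx => ⟨x, hx, 0, ⟨0, zero_smul K _⟩, add_zero x⟩⟩
    rintro _ ⟨x, hx, _, ⟨lam, rfl⟩, rfl⟩
    have hshift := (h (x - lam • u) lam).1 (by simpa using hx)
    convert hshift using 1
    simp only [smul_sub]
    abel
  · rintro ⟨rfl, hinv⟩ x c
    have hmem : ∀ y (lam : K), y ∈ C → y + lam • (v - u) ∈ C :=
      fun y lam hy => hinv ▸ Set.add_mem_add hy ⟨lam, rfl⟩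
    constructor
    · intro hu
      simpa [smul_sub] using hmem _ c hu
    · intro hv
      simpa [smul_sub] using hmem _ (-c) hv

section RiskMeasure

omit [DiscreteTopology Ω] [Nonempty Ω]

variable {A : Set (Ω →ᵇ ℝ)} {P : ℝ} {S x : Ω →ᵇ ℝ} {m : ℝ}

theorem riskMeasure_le_of_add_smul_mem (h : x + (m / P) • S ∈ A) : riskMeasure A P S x ≤ m :=
  sInf_le ⟨m, h, rfl⟩

theorem add_smul_mem_of_riskMeasure_lt (hA : ∀ x ∈ A, ∀ y, x ≤ y → y ∈ A) (hP : 0 < P)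
    (hS : 0 ≤ S) (h : riskMeasure A P S x < m) : x + (m / P) • S ∈ A := by
  obtain ⟨_, ⟨m', hm', rfl⟩, hlt⟩ := sInf_lt_iff.1 h
  refine hA _ hm' _ ?_
  have hquot : m' / P ≤ m / P := div_le_div_of_nonneg_right (EReal.coe_lt_coe_iff.1 hlt).le hP.le
  gcongr x + ?_
  exact fun ω => mul_le_mul_of_nonneg_right hquot (hS ω)

theorem riskMeasure_le_coe_iff (hA : ∀ x ∈ A, ∀ y, x ≤ y → y ∈ A) (hP : 0 < P) (hS : 0 ≤ S)
    (hlsc : LowerSemicontinuous (riskMeasure A P S)) :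
    riskMeasure A P S x ≤ m ↔ x + (m / P) • S ∈ closure A := by
  constructor
  · intro h
    have hpath : Filter.Tendsto (fun ε : ℝ => x + ((m + ε) / P) • S) (nhdsWithin 0 (Set.Ioi 0))
        (nhds (x + (m / P) • S)) := by
      have hcont : Continuous (fun ε : ℝ => x + ((m + ε) / P) • S) := by fun_prop
      simpa using (hcont.tendsto 0).mono_left nhdsWithin_le_nhds
    refine mem_closure_of_tendsto hpath (eventually_nhdsWithin_of_forall fun ε hε => ?_)
    refine add_smul_mem_of_riskMeasure_lt hA hP hS (h.trans_lt ?_)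
    exact_mod_cast lt_add_of_pos_right m hε
  · intro h
    have hclosed : IsClosed {y | riskMeasure A P S (y - (m / P) • S) ≤ m} :=
      (hlsc.isClosed_preimage m).preimage (continuous_sub_right _)
    have hsub : A ⊆ {y | riskMeasure A P S (y - (m / P) • S) ≤ m} := fun y hy =>
      riskMeasure_le_of_add_smul_mem (by rwa [sub_add_cancel])
    simpa using closure_minimal hsub hclosed h

theorem riskMeasure_eq_iff_forall_add_smul_mem_closure {B : Set (Ω →ᵇ ℝ)} {R : Ω →ᵇ ℝ}
    (hA : ∀ x ∈ A, ∀ y, x ≤ y → y ∈ A) (hB : ∀ x ∈ B, ∀ y, x ≤ y → y ∈ B) (hP : 0 < P)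
    (hS : 0 ≤ S) (hR : 0 ≤ R) (hlscS : LowerSemicontinuous (riskMeasure A P S))
    (hlscR : LowerSemicontinuous (riskMeasure B P R)) :
    riskMeasure A P S = riskMeasure B P R ↔
      ∀ x (c : ℝ), x + c • S ∈ closure A ↔ x + c • R ∈ closure B := calc
  _ ↔ ∀ x (m : ℝ), riskMeasure A P S x ≤ m ↔ riskMeasure B P R x ≤ m :=
    funext_iff.trans <| forall_congr' fun x =>
      ⟨fun h m => by rw [h], EReal.eq_of_forall_le_coe_iff⟩
  _ ↔ ∀ x (m : ℝ), x + (m / P) • S ∈ closure A ↔ x + (m / P) • R ∈ closure B := by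
    simp only [riskMeasure_le_coe_iff hA hP hS hlscS, riskMeasure_le_coe_iff hB hP hR hlscR]
  _ ↔ _ := forall_congr' fun x =>
    ⟨fun h c => by simpa [hP.ne'] using h (c * P), fun h m => h (m / P)⟩

end RiskMeasure

theorem riskMeasure_eq_iff_general
    (A B : Set (Ω →ᵇ ℝ)) (hA : IsAcceptanceSet A) (hB : IsAcceptanceSet B)
    (P : ℝ) (hP : 0 < P)
    (ST : Ω →ᵇ ℝ) (hST : 0 ≤ ST)
    (RT : Ω →ᵇ ℝ) (hRT : 0 ≤ RT)
    (hlscS : LowerSemicontinuous (riskMeasure A P ST))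
    (hlscR : LowerSemicontinuous (riskMeasure B P RT)) :
    riskMeasure A P ST = riskMeasure B P RT ↔
      closure A = closure B ∧
        closure A + Set.range (fun lam : ℝ => lam • (RT - ST)) = closure A :=
  (riskMeasure_eq_iff_forall_add_smul_mem_closure hA.2.2 hB.2.2 hP hST hRT hlscS hlscR).trans
    forall_add_smul_mem_iff_and_add_range_eq

theorem riskMeasure_eq_iff
    (A B : Set (Ω →ᵇ ℝ)) (hA : IsAcceptanceSet A) (hB : IsAcceptanceSet B)
    (P : ℝ) (hP : 0 < P)
    (ST : Ω →ᵇ ℝ) (hST : 0 ≤ ST) (hST0 : ST ≠ 0)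
    (RT : Ω →ᵇ ℝ) (hRT : 0 ≤ RT) (hRT0 : RT ≠ 0)
    (hlscS : LowerSemicontinuous (riskMeasure A P ST))
    (hlscR : LowerSemicontinuous (riskMeasure B P RT)) :
    riskMeasure A P ST = riskMeasure B P RT ↔
      closure A = closure B ∧
        closure A + Set.range (fun lam : ℝ => lam • (RT - ST)) = closure A :=
  riskMeasure_eq_iff_general A B hA hB P hP ST hST RT hRT hlscS hlscR
end
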